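/- arXiv:2506.02468 — 2 statements merged into one kernel-verified Lean document; each statement's English description precedes it below -/
import Mathlib

section
/- Let d ≥ 1, n ∈ ℕ, w > 0, let φ, ψ_1, …, ψ_d be kernels of order n, and let f ∈ C_b^n(ℝ×ℝ^d). Then the double series defining K_{n,w}^{φ,ψ} f(x,y) converges absolutely for every (x,y) ∈ ℝ×ℝ^d, and |K_{n,w}^{φ,ψ} f(x,y)| ≤ Σ_{l+|j|≤n} (1/(l! j!)) · (2^{l+|j|−(d+1)}/w^{l+|j|}) · ‖∂^{l+j} f‖_∞ · (M_l(φ)+M_0(φ)) · ∏_{i=1}^d (M_{j_i}(ψ_i)+M_0(ψ_i)). -/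
open MeasureTheory Filter Topology Finset
open scoped ENNReal NNReal

noncomputable section

/-- Discrete absolute moment `M_α(χ)` as an extended nonnegative real:
`M_α(χ) = sup_{u ∈ ℝ} Σ_{k ∈ ℤ} |u-k|^α |χ(u-k)|`. -/
def absMoment (χ : ℝ → ℝ) (α : ℝ) : ℝ≥0∞ :=
  ⨆ u : ℝ, ∑' k : ℤ, ENNReal.ofReal (|u - (k : ℝ)| ^ α * |χ (u - (k : ℝ))|)

/-- Tail supremum `sup_{u ∈ ℝ} Σ_{k ∈ ℤ, |u-k| ≥ N} |u-k|^α |χ(u-k)|`. -/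
def tailSup (χ : ℝ → ℝ) (α : ℝ) (N : ℕ) : ℝ≥0∞ :=
  ⨆ u : ℝ, ∑' k : ℤ,
    if (N : ℝ) ≤ |u - (k : ℝ)| then
      ENNReal.ofReal (|u - (k : ℝ)| ^ α * |χ (u - (k : ℝ))|) else 0

/-- Condition (ii) of order `n`: finiteness of the `n`-th absolute moment together with
uniformly vanishing tails. -/
def MomentCondition (χ : ℝ → ℝ) (n : ℕ) : Prop :=
  absMoment χ (n : ℝ) < ⊤ ∧ Tendsto (fun N : ℕ => tailSup χ (n : ℝ) N) atTop (𝓝 0)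

/-- `χ` is a kernel of order `n`. -/
def IsKernelOfOrder (χ : ℝ → ℝ) (n : ℕ) : Prop :=
  (∀ u : ℝ, HasSum (fun k : ℤ => χ (u - (k : ℝ))) 1) ∧ MomentCondition χ n

/-- Discrete algebraic moment `m_r(χ, u) = Σ_{k ∈ ℤ} (k-u)^r χ(u-k)`. -/
def algMoment (χ : ℝ → ℝ) (r : ℕ) (u : ℝ) : ℝ :=
  ∑' k : ℤ, ((k : ℝ) - u) ^ r * χ (u - (k : ℝ))

/-- Partial derivative in the first (time) variable. -/
def dx (d : ℕ) (f : ℝ × (Fin d → ℝ) → ℝ) : ℝ × (Fin d → ℝ) → ℝ :=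
  fun p => deriv (fun t => f (t, p.2)) p.1

/-- Partial derivative in the `i`-th space variable. -/
def dy (d : ℕ) (i : Fin d) (f : ℝ × (Fin d → ℝ) → ℝ) : ℝ × (Fin d → ℝ) → ℝ :=
  fun p => deriv (fun t => f (p.1, Function.update p.2 i t)) (p.2 i)

/-- Mixed partial derivative `∂^{l+j} f = ∂^{l+|j|} f / (∂x^l ∂y_1^{j_1} ⋯ ∂y_d^{j_d})`. -/
def pderivMixed (d : ℕ) (l : ℕ) (j : Fin d → ℕ) (f : ℝ × (Fin d → ℝ) → ℝ) :
    ℝ × (Fin d → ℝ) → ℝ :=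
  (dx d)^[l] (Fin.foldr d (fun i g => (dy d i)^[j i] g) f)

/-- Supremum norm. -/
def supNorm (d : ℕ) (g : ℝ × (Fin d → ℝ) → ℝ) : ℝ :=
  ⨆ p : ℝ × (Fin d → ℝ), |g p|

/-- `C_b^n(ℝ × ℝ^d)`: `n` times continuously differentiable with all partial
derivatives up to order `n` bounded. -/
def CbN (d n : ℕ) (f : ℝ × (Fin d → ℝ) → ℝ) : Prop :=
  ContDiff ℝ (n : ℕ∞) f ∧
    ∀ (l : ℕ) (j : Fin d → ℕ), l + ∑ i, j i ≤ n →
      ∃ C : ℝ, ∀ p, |pderivMixed d l j f p| ≤ C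

/-- `C^n(ℝ × ℝ^d)`: `n` times continuously differentiable with all partial derivatives
up to order `n` bounded and uniformly continuous. -/
def CuN (d n : ℕ) (f : ℝ × (Fin d → ℝ) → ℝ) : Prop :=
  CbN d n f ∧
    ∀ (l : ℕ) (j : Fin d → ℕ), l + ∑ i, j i ≤ n →
      UniformContinuous (pderivMixed d l j f)

/-- The index set of pairs `(l, j)` with `l + |j| ≤ n`. -/
def idxLE (d n : ℕ) : Finset (ℕ × (Fin d → ℕ)) :=
  (Finset.range (n + 1) ×ˢ Fintype.piFinset fun _ : Fin d => Finset.range (n + 1)).filter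
    fun lj => lj.1 + ∑ i, lj.2 i ≤ n

/-- The index set of pairs `(l, j)` with `l + |j| = n`. -/
def idxEQ (d n : ℕ) : Finset (ℕ × (Fin d → ℕ)) :=
  (Finset.range (n + 1) ×ˢ Fintype.piFinset fun _ : Fin d => Finset.range (n + 1)).filter
    fun lj => lj.1 + ∑ i, lj.2 i = n

/-- General term (indexed by `(k, m) ∈ ℤ × ℤ^d`) of the Hermite-type sampling
Kantorovich operator. -/
def Kterm (d n : ℕ) (φ : ℝ → ℝ) (ψ : Fin d → ℝ → ℝ) (w : ℝ)
    (f : ℝ × (Fin d → ℝ) → ℝ) (p : ℝ × (Fin d → ℝ)) (km : ℤ × (Fin d → ℤ)) : ℝ :=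
  (φ (w * p.1 - (km.1 : ℝ)) * ∏ i, ψ i (w * p.2 i - (km.2 i : ℝ))) *
    ∑ lj ∈ idxLE d n,
      (1 / ((lj.1.factorial : ℝ) * ∏ i, ((lj.2 i).factorial : ℝ))) * w ^ (d + 1) *
        ∫ u in Set.Icc ((km.1 : ℝ) / w) (((km.1 : ℝ) + 1) / w),
          ∫ v in Set.univ.pi fun i => Set.Icc ((km.2 i : ℝ) / w) (((km.2 i : ℝ) + 1) / w),
            pderivMixed d lj.1 lj.2 f (u, v) * (p.1 - u) ^ lj.1 *
              ∏ i, (p.2 i - v i) ^ lj.2 i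

/-- The Hermite-type sampling Kantorovich operator `K_{n,w}^{φ,ψ}`. -/
def Kop (d n : ℕ) (φ : ℝ → ℝ) (ψ : Fin d → ℝ → ℝ) (w : ℝ)
    (f : ℝ × (Fin d → ℝ) → ℝ) (p : ℝ × (Fin d → ℝ)) : ℝ :=
  ∑' k : ℤ, ∑' m : Fin d → ℤ, Kterm d n φ ψ w f p (k, m)

/-- Mixed modulus of continuity `ω(g, δ, γ_1, …, γ_d)`. -/
def mixedModulus (d : ℕ) (g : ℝ × (Fin d → ℝ) → ℝ) (δ : ℝ) (γ : Fin d → ℝ) : ℝ :=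
  sSup {r : ℝ | ∃ p q : ℝ × (Fin d → ℝ),
    |p.1 - q.1| < δ ∧ (∀ i, |p.2 i - q.2 i| < γ i) ∧ r = |g p - g q|}

lemma one_add_pow_le (l : ℕ) {t : ℝ} (ht : 0 ≤ t) :
    (1 + t) ^ l ≤ 2 ^ l / 2 * (1 + t ^ l) := by
  have h := (convexOn_pow l).2 (Set.mem_Ici.2 zero_le_one) (Set.mem_Ici.2 ht)
      (by norm_num : (0:ℝ) ≤ 1/2) (by norm_num : (0:ℝ) ≤ 1/2) (by norm_num)
  have h2 : ((1 + t)/2) ^ l ≤ (1 + t ^ l)/2 := by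
    have e : (1/2 : ℝ) • (1:ℝ) + (1/2 : ℝ) • t = (1+t)/2 := by
      simp [smul_eq_mul]; ring
    rw [e] at h
    simp only [smul_eq_mul, one_pow] at h
    linarith
  calc (1+t)^l = 2 ^ l * ((1+t)/2) ^ l := by rw [div_pow]; field_simp
  _ ≤ 2 ^ l * ((1 + t^l)/2) := by
      apply mul_le_mul_of_nonneg_left h2 (by positivity)
  _ = 2 ^ l / 2 * (1 + t ^ l) := by ring


lemma tsum_absMoment_le (χ : ℝ → ℝ) (l : ℕ) (u : ℝ) :
    ∑' k : ℤ, ENNReal.ofReal (|u - (k : ℝ)| ^ l * |χ (u - (k : ℝ))|) ≤ absMoment χ (l : ℝ) := by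
  have h := le_iSup (fun u : ℝ => ∑' k : ℤ,
    ENNReal.ofReal (|u - (k : ℝ)| ^ (l : ℝ) * |χ (u - (k : ℝ))|)) u
  exact le_trans (le_of_eq (tsum_congr fun k => by rw [Real.rpow_natCast])) h

lemma tsum_absMoment_zero_le (χ : ℝ → ℝ) (u : ℝ) :
    ∑' k : ℤ, ENNReal.ofReal |χ (u - (k : ℝ))| ≤ absMoment χ 0 := by
  have h := le_iSup (fun u : ℝ => ∑' k : ℤ,
    ENNReal.ofReal (|u - (k : ℝ)| ^ (0 : ℝ) * |χ (u - (k : ℝ))|)) u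
  exact le_trans (le_of_eq (tsum_congr fun k => by rw [Real.rpow_zero, one_mul])) h

lemma tail_tsum_le {χ : ℝ → ℝ} {n : ℕ} (u : ℝ) :
    (∑' k : ℤ, if k = round u then 0 else ENNReal.ofReal (|χ (u - (k : ℝ))|))
      ≤ ENNReal.ofReal (2 ^ n) * absMoment χ (n : ℝ) := by
  have hb : ∀ k : ℤ, (if k = round u then 0 else ENNReal.ofReal (|χ (u - (k : ℝ))|))
      ≤ ENNReal.ofReal (2 ^ n) * ENNReal.ofReal (|u - (k : ℝ)| ^ n * |χ (u - (k : ℝ))|) := by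
    intro k
    by_cases hk : k = round u
    · simp [hk]
    · rw [if_neg hk, ← ENNReal.ofReal_mul (by positivity)]
      apply ENNReal.ofReal_le_ofReal
      have h1 : (1 : ℝ) / 2 ≤ |u - (k : ℝ)| := by
        have h2 : |u - (round u : ℝ)| ≤ 1 / 2 := abs_sub_round u
        have h3 : (1 : ℝ) ≤ |(round u : ℝ) - (k : ℝ)| := by
          have hne : round u - k ≠ 0 := sub_ne_zero.2 fun h => hk h.symm
          have := Int.one_le_abs hne
          calc (1:ℝ) = ((1:ℤ):ℝ) := by norm_num
          _ ≤ ((|round u - k| : ℤ) : ℝ) := by exact_mod_cast this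
          _ = |(round u : ℝ) - (k : ℝ)| := by push_cast; ring_nf
        have h4 : |(round u : ℝ) - (k : ℝ)| ≤ |(round u : ℝ) - u| + |u - (k : ℝ)| :=
          abs_sub_le _ _ _
        rw [abs_sub_comm] at h2
        linarith
      have h5 : (1 : ℝ) ≤ 2 ^ n * |u - (k : ℝ)| ^ n := by
        have : ((1:ℝ)/2) ^ n ≤ |u - (k : ℝ)| ^ n := pow_le_pow_left₀ (by norm_num) h1 n
        calc (1:ℝ) = 2 ^ n * ((1:ℝ)/2) ^ n := by
              rw [← mul_pow]; norm_num
        _ ≤ 2 ^ n * |u - (k : ℝ)| ^ n := by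
              exact mul_le_mul_of_nonneg_left this (by positivity)
      nlinarith [abs_nonneg (χ (u - (k:ℝ))), abs_nonneg (u - (k:ℝ)), pow_nonneg (abs_nonneg (u - (k:ℝ))) n]
  calc (∑' k : ℤ, if k = round u then 0 else ENNReal.ofReal (|χ (u - (k : ℝ))|))
      ≤ ∑' k : ℤ, ENNReal.ofReal (2 ^ n) * ENNReal.ofReal (|u - (k : ℝ)| ^ n * |χ (u - (k : ℝ))|) :=
        ENNReal.tsum_le_tsum hb
  _ = ENNReal.ofReal (2 ^ n) * ∑' k : ℤ, ENNReal.ofReal (|u - (k : ℝ)| ^ n * |χ (u - (k : ℝ))|) :=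
        ENNReal.tsum_mul_left
  _ ≤ ENNReal.ofReal (2 ^ n) * absMoment χ (n : ℝ) := by
        exact mul_le_mul_right (tsum_absMoment_le χ n u) _

lemma absMoment_zero_lt_top {χ : ℝ → ℝ} {n : ℕ} (hχ : IsKernelOfOrder χ n) :
    absMoment χ 0 < ⊤ := by
  have hsum := hχ.1
  have hM := hχ.2.1
  set C : ℝ≥0∞ := absMoment χ (n : ℝ) with hCdef
  have hCtop : ENNReal.ofReal (2 ^ n) * C ≠ ⊤ := ENNReal.mul_ne_top ENNReal.ofReal_ne_top hM.ne
  have keyR : ∀ u : ℝ, |χ (u - (round u : ℝ))| ≤ 1 + (ENNReal.ofReal (2 ^ n) * C).toReal := by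
    intro u
    have hs0 : Summable fun k : ℤ => χ (u - (k : ℝ)) := (hsum u).summable
    have h1 : (1 : ℝ) = χ (u - (round u : ℝ)) +
        ∑' k : ℤ, if k = round u then 0 else χ (u - (k : ℝ)) := by
      conv_lhs => rw [← (hsum u).tsum_eq]
      exact Summable.tsum_eq_add_tsum_ite hs0 (round u)
    have hfin : (∑' k : ℤ, if k = round u then 0 else ENNReal.ofReal (|χ (u - (k : ℝ))|)) ≠ ⊤ :=
      ((tail_tsum_le (n := n) u).trans_lt hCtop.lt_top).ne
    have hsummT : Summable fun k : ℤ => if k = round u then 0 else |χ (u - (k : ℝ))| := by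
      have h := ENNReal.summable_toReal hfin
      refine h.congr fun k => ?_
      by_cases hk : k = round u <;> simp [hk, ENNReal.toReal_ofReal (abs_nonneg _)]
    have habs : |∑' k : ℤ, if k = round u then 0 else χ (u - (k : ℝ))|
        ≤ (ENNReal.ofReal (2 ^ n) * C).toReal := by
      have h2 : |∑' k : ℤ, if k = round u then 0 else χ (u - (k : ℝ))|
          ≤ ∑' k : ℤ, if k = round u then 0 else |χ (u - (k : ℝ))| := by
        have := norm_tsum_le_tsum_norm (f := fun k : ℤ => if k = round u then 0 else χ (u - (k : ℝ)))
          (by refine hsummT.congr fun k => ?_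
              by_cases hk : k = round u <;> simp [hk, Real.norm_eq_abs])
        rw [Real.norm_eq_abs] at this
        refine this.trans (le_of_eq (tsum_congr fun k => ?_))
        by_cases hk : k = round u <;> simp [hk, Real.norm_eq_abs]
      refine h2.trans ?_
      have h3 : (∑' k : ℤ, if k = round u then 0 else |χ (u - (k : ℝ))|)
          = (∑' k : ℤ, if k = round u then 0 else ENNReal.ofReal (|χ (u - (k : ℝ))|)).toReal := by
        rw [ENNReal.tsum_toReal_eq (fun k => by by_cases hk : k = round u <;> simp [hk])]
        exact tsum_congr fun k => by
          by_cases hk : k = round u <;> simp [hk, ENNReal.toReal_ofReal (abs_nonneg _)]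
      rw [h3]
      exact ENNReal.toReal_mono hCtop (tail_tsum_le (n := n) u)
    have : χ (u - (round u : ℝ)) = 1 - ∑' k : ℤ, if k = round u then 0 else χ (u - (k : ℝ)) := by
      linarith [h1]
    rw [this]
    calc |1 - ∑' k : ℤ, if k = round u then 0 else χ (u - (k : ℝ))|
        ≤ |(1:ℝ)| + |∑' k : ℤ, if k = round u then 0 else χ (u - (k : ℝ))| := abs_sub _ _
    _ ≤ 1 + (ENNReal.ofReal (2 ^ n) * C).toReal := by rw [abs_one]; linarith [habs]
  have : absMoment χ 0 ≤ ENNReal.ofReal (1 + (ENNReal.ofReal (2 ^ n) * C).toReal)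
      + ENNReal.ofReal (2 ^ n) * C := by
    refine iSup_le fun u => ?_
    have e : (∑' k : ℤ, ENNReal.ofReal (|u - (k : ℝ)| ^ (0:ℝ) * |χ (u - (k : ℝ))|))
        = ∑' k : ℤ, ENNReal.ofReal (|χ (u - (k : ℝ))|) := by
      exact tsum_congr fun k => by rw [Real.rpow_zero, one_mul]
    rw [e, ENNReal.tsum_eq_add_tsum_ite (round u)]
    refine add_le_add (ENNReal.ofReal_le_ofReal (keyR u)) ?_
    refine le_trans (le_of_eq (tsum_congr fun k => ?_)) (tail_tsum_le (n := n) u)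
    by_cases hk : k = round u <;> simp [hk]
  exact this.trans_lt (ENNReal.add_lt_top.2 ⟨ENNReal.ofReal_lt_top, hCtop.lt_top⟩)

lemma absMoment_natCast_le {χ : ℝ → ℝ} (n : ℕ) {l : ℕ} (hl : l ≤ n) :
    absMoment χ (l : ℝ) ≤ absMoment χ 0 + absMoment χ (n : ℝ) := by
  refine iSup_le fun u => ?_
  have hpt : ∀ k : ℤ, ENNReal.ofReal (|u - (k : ℝ)| ^ (l : ℝ) * |χ (u - (k : ℝ))|)
      ≤ ENNReal.ofReal (|u - (k : ℝ)| ^ (0 : ℝ) * |χ (u - (k : ℝ))|)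
        + ENNReal.ofReal (|u - (k : ℝ)| ^ (n : ℝ) * |χ (u - (k : ℝ))|) := by
    intro k
    rw [← ENNReal.ofReal_add (by positivity) (by positivity)]
    apply ENNReal.ofReal_le_ofReal
    rw [Real.rpow_natCast, Real.rpow_natCast, Real.rpow_zero, one_mul]
    have habs := abs_nonneg (u - (k : ℝ))
    have hcc : |u - (k : ℝ)| ^ l ≤ 1 + |u - (k : ℝ)| ^ n := by
      rcases le_total (|u - (k : ℝ)|) 1 with h | h
      · have := pow_le_one₀ habs h (n := l)
        nlinarith [pow_nonneg habs n]
      · have := pow_le_pow_right₀ h hl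
        nlinarith
    nlinarith [abs_nonneg (χ (u - (k : ℝ))), pow_nonneg habs l, pow_nonneg habs n]
  calc (∑' k : ℤ, ENNReal.ofReal (|u - (k : ℝ)| ^ (l : ℝ) * |χ (u - (k : ℝ))|))
      ≤ ∑' k : ℤ, (ENNReal.ofReal (|u - (k : ℝ)| ^ (0 : ℝ) * |χ (u - (k : ℝ))|)
        + ENNReal.ofReal (|u - (k : ℝ)| ^ (n : ℝ) * |χ (u - (k : ℝ))|)) := ENNReal.tsum_le_tsum hpt
  _ = (∑' k : ℤ, ENNReal.ofReal (|u - (k : ℝ)| ^ (0 : ℝ) * |χ (u - (k : ℝ))|))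
      + ∑' k : ℤ, ENNReal.ofReal (|u - (k : ℝ)| ^ (n : ℝ) * |χ (u - (k : ℝ))|) := ENNReal.tsum_add
  _ ≤ absMoment χ 0 + absMoment χ (n : ℝ) :=
      add_le_add
        (le_iSup (fun u : ℝ => ∑' k : ℤ,
          ENNReal.ofReal (|u - (k : ℝ)| ^ (0 : ℝ) * |χ (u - (k : ℝ))|)) u)
        (le_iSup (fun u : ℝ => ∑' k : ℤ,
          ENNReal.ofReal (|u - (k : ℝ)| ^ (n : ℝ) * |χ (u - (k : ℝ))|)) u)

lemma absMoment_natCast_lt_top {χ : ℝ → ℝ} {n : ℕ} (hχ : IsKernelOfOrder χ n)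
    {l : ℕ} (hl : l ≤ n) : absMoment χ (l : ℝ) < ⊤ :=
  (absMoment_natCast_le n hl).trans_lt
    (ENNReal.add_lt_top.2 ⟨absMoment_zero_lt_top hχ, hχ.2.1⟩)

/-- The key one-dimensional factor estimate. -/
lemma sum_F_le (χ : ℝ → ℝ) (l : ℕ) {w : ℝ} (hw : 0 < w) (u : ℝ) :
    ∑' k : ℤ, ENNReal.ofReal ((1 + |u - (k : ℝ)|) ^ l / w ^ l * |χ (u - (k : ℝ))|)
      ≤ ENNReal.ofReal (2 ^ l / (2 * w ^ l)) * (absMoment χ (l : ℝ) + absMoment χ 0) := by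
  have hwl : (0:ℝ) < w ^ l := by positivity
  have hb : ∀ k : ℤ, ENNReal.ofReal ((1 + |u - (k : ℝ)|) ^ l / w ^ l * |χ (u - (k : ℝ))|)
      ≤ ENNReal.ofReal (2 ^ l / (2 * w ^ l)) *
        (ENNReal.ofReal (|u - (k : ℝ)| ^ l * |χ (u - (k : ℝ))|)
          + ENNReal.ofReal (|χ (u - (k : ℝ))|)) := by
    intro k
    rw [← ENNReal.ofReal_add (by positivity) (abs_nonneg _),
      ← ENNReal.ofReal_mul (by positivity)]
    apply ENNReal.ofReal_le_ofReal
    have h1 : (1 + |u - (k : ℝ)|) ^ l ≤ 2 ^ l / 2 * (1 + |u - (k : ℝ)| ^ l) :=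
      one_add_pow_le l (abs_nonneg _)
    have h2 : (1 + |u - (k : ℝ)|) ^ l / w ^ l * |χ (u - (k : ℝ))|
        ≤ (2 ^ l / 2 * (1 + |u - (k : ℝ)| ^ l)) / w ^ l * |χ (u - (k : ℝ))| := by
      gcongr
    refine h2.trans (le_of_eq ?_)
    field_simp
    ring
  calc (∑' k : ℤ, ENNReal.ofReal ((1 + |u - (k : ℝ)|) ^ l / w ^ l * |χ (u - (k : ℝ))|))
      ≤ ∑' k : ℤ, ENNReal.ofReal (2 ^ l / (2 * w ^ l)) *
        (ENNReal.ofReal (|u - (k : ℝ)| ^ l * |χ (u - (k : ℝ))|)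
          + ENNReal.ofReal (|χ (u - (k : ℝ))|)) := ENNReal.tsum_le_tsum hb
  _ = ENNReal.ofReal (2 ^ l / (2 * w ^ l)) *
      ((∑' k : ℤ, ENNReal.ofReal (|u - (k : ℝ)| ^ l * |χ (u - (k : ℝ))|))
        + ∑' k : ℤ, ENNReal.ofReal (|χ (u - (k : ℝ))|)) := by
      rw [ENNReal.tsum_mul_left, ENNReal.tsum_add]
  _ ≤ ENNReal.ofReal (2 ^ l / (2 * w ^ l)) * (absMoment χ (l : ℝ) + absMoment χ 0) := by
      exact mul_le_mul_right (add_le_add (tsum_absMoment_le χ l u) (tsum_absMoment_zero_le χ u)) _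

lemma tsum_pi_prod : ∀ (d : ℕ) (G : Fin d → ℤ → ℝ≥0∞),
    ∑' m : Fin d → ℤ, ∏ i, G i (m i) = ∏ i, ∑' j : ℤ, G i j := by
  intro d
  induction d with
  | zero =>
      intro G
      have h1 : (∑' m : Fin 0 → ℤ, ∏ i, G i (m i)) = 1 := by
        rw [tsum_congr (fun m : Fin 0 → ℤ => (by simp : (∏ i, G i (m i)) = 1))]
        exact tsum_eq_single default fun b hb => absurd (Subsingleton.elim b default) hb
      rw [h1]
      simp
  | succ d ih =>
      intro G
      have e := (Fin.consEquiv (fun _ : Fin (d+1) => ℤ)).tsum_eq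
        (f := fun m : Fin (d+1) → ℤ => ∏ i, G i (m i))
      rw [← e]
      have e2 : ∀ q : ℤ × (Fin d → ℤ),
          (∏ i, G i ((Fin.consEquiv (fun _ : Fin (d+1) => ℤ)) q i))
            = G 0 q.1 * ∏ i : Fin d, G i.succ (q.2 i) := by
        intro q
        rw [Fin.prod_univ_succ]
        simp [Fin.consEquiv]
      rw [tsum_congr e2, ENNReal.tsum_prod']
      calc (∑' (a : ℤ) (g : Fin d → ℤ), G 0 a * ∏ i : Fin d, G i.succ (g i))
          = ∑' a : ℤ, G 0 a * ∑' g : Fin d → ℤ, ∏ i : Fin d, G i.succ (g i) := by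
            exact tsum_congr fun a => ENNReal.tsum_mul_left
      _ = (∑' a : ℤ, G 0 a) * ∑' g : Fin d → ℤ, ∏ i : Fin d, G i.succ (g i) :=
            ENNReal.tsum_mul_right
      _ = (∑' a : ℤ, G 0 a) * ∏ i : Fin d, ∑' j : ℤ, G i.succ j := by rw [ih]
      _ = ∏ i, ∑' j : ℤ, G i j := (Fin.prod_univ_succ (fun i => ∑' j : ℤ, G i j)).symm


lemma supNorm_nonneg (d : ℕ) (g : ℝ × (Fin d → ℝ) → ℝ) : 0 ≤ supNorm d g :=
  Real.iSup_nonneg fun q => abs_nonneg _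

lemma mem_idxLE {d n : ℕ} {lj : ℕ × (Fin d → ℕ)} (h : lj ∈ idxLE d n) :
    lj.1 + ∑ i, lj.2 i ≤ n := (Finset.mem_filter.1 h).2

lemma Kterm_bound (d n : ℕ) {w : ℝ} (hw : 0 < w) (φ : ℝ → ℝ) (ψ : Fin d → ℝ → ℝ)
    (f : ℝ × (Fin d → ℝ) → ℝ) (hf : CbN d n f)
    (p : ℝ × (Fin d → ℝ)) (km : ℤ × (Fin d → ℤ)) :
    |Kterm d n φ ψ w f p km| ≤
      ∑ lj ∈ idxLE d n,
        (1 / ((lj.1.factorial : ℝ) * ∏ i, ((lj.2 i).factorial : ℝ))) *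
          supNorm d (pderivMixed d lj.1 lj.2 f) *
          ((1 + |w * p.1 - (km.1 : ℝ)|) ^ lj.1 / w ^ lj.1 * |φ (w * p.1 - (km.1 : ℝ))|) *
          ∏ i, ((1 + |w * p.2 i - (km.2 i : ℝ)|) ^ (lj.2 i) / w ^ (lj.2 i) *
            |ψ i (w * p.2 i - (km.2 i : ℝ))|) := by
  obtain ⟨k, m⟩ := km
  obtain ⟨x, y⟩ := p
  have hwne : w ≠ 0 := ne_of_gt hw
  have hNrm_le : ∀ lj ∈ idxLE d n, ∀ q : ℝ × (Fin d → ℝ),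
      |pderivMixed d lj.1 lj.2 f q| ≤ supNorm d (pderivMixed d lj.1 lj.2 f) := by
    intro lj hlj q
    obtain ⟨C, hC⟩ := hf.2 lj.1 lj.2 (mem_idxLE hlj)
    exact le_ciSup ⟨C, fun r hr => by obtain ⟨q', rfl⟩ := hr; exact hC q'⟩ q
  have hdist : ∀ (z : ℝ) (a : ℤ) (u : ℝ), u ∈ Set.Icc ((a : ℝ)/w) (((a : ℝ)+1)/w) →
      |z - u| ≤ (1 + |w * z - (a : ℝ)|) / w := by
    intro z a u hu
    obtain ⟨h1, h2⟩ := hu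
    have h3 : |z - (a : ℝ)/w| = |w * z - (a : ℝ)| / w := by
      have he : z - (a : ℝ)/w = (w * z - (a : ℝ))/w := by field_simp
      rw [he, abs_div, abs_of_pos hw]
    have h1w : (0:ℝ) < 1/w := one_div_pos.2 hw
    have h4 : |(a : ℝ)/w - u| ≤ 1 / w := by
      rw [abs_le]
      have he : ((a : ℝ)+1)/w = (a : ℝ)/w + 1/w := by ring
      rw [he] at h2
      constructor <;> linarith
    calc |z - u| ≤ |z - (a : ℝ)/w| + |(a : ℝ)/w - u| := abs_sub_le _ _ _
    _ ≤ |w * z - (a : ℝ)| / w + 1 / w := by rw [h3]; linarith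
    _ = (1 + |w * z - (a : ℝ)|) / w := by ring
  have hvol1 : ∀ a : ℤ, volume (Set.Icc ((a : ℝ)/w) (((a : ℝ)+1)/w)) = ENNReal.ofReal (1/w) := by
    intro a
    rw [Real.volume_Icc]
    congr 1
    ring
  have hvolS : volume (Set.univ.pi fun i => Set.Icc ((m i : ℝ)/w) (((m i : ℝ)+1)/w))
      = ENNReal.ofReal ((1/w)^d) := by
    rw [volume_pi_pi]
    rw [Finset.prod_congr rfl (fun i _ => hvol1 (m i)), Finset.prod_const, Finset.card_univ,
      Fintype.card_fin, ← ENNReal.ofReal_pow (by positivity)]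
  have hterm : ∀ lj ∈ idxLE d n,
      (|φ (w * x - (k : ℝ))| * ∏ i, |ψ i (w * y i - (m i : ℝ))|) *
        |(1 / ((lj.1.factorial : ℝ) * ∏ i, ((lj.2 i).factorial : ℝ))) * w ^ (d + 1) *
          ∫ u in Set.Icc ((k : ℝ) / w) (((k : ℝ) + 1) / w),
            ∫ v in Set.univ.pi fun i => Set.Icc ((m i : ℝ) / w) (((m i : ℝ) + 1) / w),
              pderivMixed d lj.1 lj.2 f (u, v) * (x - u) ^ lj.1 *
                ∏ i, (y i - v i) ^ lj.2 i| ≤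
      (1 / ((lj.1.factorial : ℝ) * ∏ i, ((lj.2 i).factorial : ℝ))) *
        supNorm d (pderivMixed d lj.1 lj.2 f) *
        ((1 + |w * x - (k : ℝ)|) ^ lj.1 / w ^ lj.1 * |φ (w * x - (k : ℝ))|) *
        ∏ i, ((1 + |w * y i - (m i : ℝ)|) ^ (lj.2 i) / w ^ (lj.2 i) *
          |ψ i (w * y i - (m i : ℝ))|) := by
    intro lj hlj
    set N := supNorm d (pderivMixed d lj.1 lj.2 f) with hNdef
    have hN0 : 0 ≤ N := supNorm_nonneg _ _
    set c : ℝ := 1 / ((lj.1.factorial : ℝ) * ∏ i, ((lj.2 i).factorial : ℝ)) with hcdef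
    have hc0 : 0 ≤ c := by positivity
    set B : ℝ := N * ((1 + |w * x - (k : ℝ)|)/w) ^ lj.1 *
      ∏ i, ((1 + |w * y i - (m i : ℝ)|)/w) ^ (lj.2 i) with hBdef
    have hB0 : 0 ≤ B := by
      apply mul_nonneg (mul_nonneg hN0 (pow_nonneg (div_nonneg (by positivity) hw.le) _))
      exact Finset.prod_nonneg fun i _ => pow_nonneg (div_nonneg (by positivity) hw.le) _
    have hin : ∀ u ∈ Set.Icc ((k : ℝ) / w) (((k : ℝ) + 1) / w),
        |∫ v in Set.univ.pi fun i => Set.Icc ((m i : ℝ) / w) (((m i : ℝ) + 1) / w),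
          pderivMixed d lj.1 lj.2 f (u, v) * (x - u) ^ lj.1 * ∏ i, (y i - v i) ^ lj.2 i|
        ≤ B * (1/w)^d := by
      intro u hu
      haveI : Fact (volume (Set.univ.pi fun i =>
          Set.Icc ((m i : ℝ) / w) (((m i : ℝ) + 1) / w)) < ⊤) :=
        Fact.mk (by rw [hvolS]; exact ENNReal.ofReal_lt_top)
      have hae : ∀ᵐ v ∂(volume.restrict (Set.univ.pi fun i =>
          Set.Icc ((m i : ℝ) / w) (((m i : ℝ) + 1) / w))),
          ‖pderivMixed d lj.1 lj.2 f (u, v) * (x - u) ^ lj.1 * ∏ i, (y i - v i) ^ lj.2 i‖ ≤ B := by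
        refine ae_restrict_of_forall_mem (MeasurableSet.univ_pi fun i => measurableSet_Icc) ?_
        intro v hv
        rw [Real.norm_eq_abs, abs_mul, abs_mul, abs_pow, Finset.abs_prod]
        have b1 : |pderivMixed d lj.1 lj.2 f (u, v)| ≤ N := hNrm_le lj hlj (u, v)
        have b2 : |x - u| ^ lj.1 ≤ ((1 + |w * x - (k : ℝ)|)/w) ^ lj.1 :=
          pow_le_pow_left₀ (abs_nonneg _) (hdist x k u hu) _
        have b3 : ∀ i, |(y i - v i) ^ lj.2 i| ≤ ((1 + |w * y i - (m i : ℝ)|)/w) ^ lj.2 i := by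
          intro i
          rw [abs_pow]
          exact pow_le_pow_left₀ (abs_nonneg _) (hdist (y i) (m i) (v i) (hv i (Set.mem_univ i))) _
        rw [hBdef]
        refine mul_le_mul (mul_le_mul b1 b2 (pow_nonneg (abs_nonneg _) _) hN0)
          (Finset.prod_le_prod (fun i _ => abs_nonneg _) fun i _ => b3 i)
          (Finset.prod_nonneg fun i _ => abs_nonneg _) ?_
        exact mul_nonneg hN0 (pow_nonneg (div_nonneg (by positivity) hw.le) _)
      have h := norm_integral_le_of_norm_le_const hae
      rw [Real.norm_eq_abs, measureReal_restrict_apply_univ, measureReal_def, hvolS,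
        ENNReal.toReal_ofReal (by positivity : (0:ℝ) ≤ (1/w)^d)] at h
      exact h
    have hout : |∫ u in Set.Icc ((k : ℝ) / w) (((k : ℝ) + 1) / w),
        ∫ v in Set.univ.pi fun i => Set.Icc ((m i : ℝ) / w) (((m i : ℝ) + 1) / w),
          pderivMixed d lj.1 lj.2 f (u, v) * (x - u) ^ lj.1 * ∏ i, (y i - v i) ^ lj.2 i|
        ≤ (B * (1/w)^d) * (1/w) := by
      haveI : Fact (volume (Set.Icc ((k : ℝ) / w) (((k : ℝ) + 1) / w)) < ⊤) :=
        Fact.mk (by rw [hvol1]; exact ENNReal.ofReal_lt_top)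
      have hae : ∀ᵐ u ∂(volume.restrict (Set.Icc ((k : ℝ) / w) (((k : ℝ) + 1) / w))),
          ‖∫ v in Set.univ.pi fun i => Set.Icc ((m i : ℝ) / w) (((m i : ℝ) + 1) / w),
            pderivMixed d lj.1 lj.2 f (u, v) * (x - u) ^ lj.1 * ∏ i, (y i - v i) ^ lj.2 i‖
            ≤ B * (1/w)^d := by
        refine ae_restrict_of_forall_mem measurableSet_Icc ?_
        intro u hu
        rw [Real.norm_eq_abs]
        exact hin u hu
      have h := norm_integral_le_of_norm_le_const hae
      rw [Real.norm_eq_abs, measureReal_restrict_apply_univ, measureReal_def, hvol1,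
        ENNReal.toReal_ofReal (by positivity : (0:ℝ) ≤ 1/w)] at h
      exact h
    have habs0 : 0 ≤ |φ (w * x - (k : ℝ))| * ∏ i, |ψ i (w * y i - (m i : ℝ))| := by positivity
    calc (|φ (w * x - (k : ℝ))| * ∏ i, |ψ i (w * y i - (m i : ℝ))|) *
        |c * w ^ (d + 1) * ∫ u in Set.Icc ((k : ℝ) / w) (((k : ℝ) + 1) / w),
          ∫ v in Set.univ.pi fun i => Set.Icc ((m i : ℝ) / w) (((m i : ℝ) + 1) / w),
            pderivMixed d lj.1 lj.2 f (u, v) * (x - u) ^ lj.1 * ∏ i, (y i - v i) ^ lj.2 i|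
        = (|φ (w * x - (k : ℝ))| * ∏ i, |ψ i (w * y i - (m i : ℝ))|) *
          (c * w ^ (d + 1) *
            |∫ u in Set.Icc ((k : ℝ) / w) (((k : ℝ) + 1) / w),
              ∫ v in Set.univ.pi fun i => Set.Icc ((m i : ℝ) / w) (((m i : ℝ) + 1) / w),
                pderivMixed d lj.1 lj.2 f (u, v) * (x - u) ^ lj.1 * ∏ i, (y i - v i) ^ lj.2 i|) := by
          rw [abs_mul, abs_mul, abs_of_nonneg hc0, abs_of_nonneg (by positivity : (0:ℝ) ≤ w ^ (d+1))]
    _ ≤ (|φ (w * x - (k : ℝ))| * ∏ i, |ψ i (w * y i - (m i : ℝ))|) *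
          (c * w ^ (d + 1) * ((B * (1/w)^d) * (1/w))) := by
        apply mul_le_mul_of_nonneg_left _ habs0
        apply mul_le_mul_of_nonneg_left _ (by positivity : (0:ℝ) ≤ c * w ^ (d+1))
        calc |∫ u in Set.Icc ((k : ℝ) / w) (((k : ℝ) + 1) / w),
            ∫ v in Set.univ.pi fun i => Set.Icc ((m i : ℝ) / w) (((m i : ℝ) + 1) / w),
              pderivMixed d lj.1 lj.2 f (u, v) * (x - u) ^ lj.1 * ∏ i, (y i - v i) ^ lj.2 i|
            ≤ B * (1/w)^d * (1/w) := hout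
        _ = (B * (1/w)^d) * (1/w) := by ring
    _ = c * N * ((1 + |w * x - (k : ℝ)|) ^ lj.1 / w ^ lj.1 * |φ (w * x - (k : ℝ))|) *
          ∏ i, ((1 + |w * y i - (m i : ℝ)|) ^ (lj.2 i) / w ^ (lj.2 i) *
            |ψ i (w * y i - (m i : ℝ))|) := by
        have hww : w ^ (d+1) * ((1/w)^d * (1/w)) = 1 := by
          rw [div_pow, one_pow, div_mul_div_comm, one_mul, ← pow_succ,
            mul_one_div, div_self (pow_ne_zero _ hwne)]
        have hP : (∏ i, ((1 + |w * y i - (m i : ℝ)|) ^ (lj.2 i) / w ^ (lj.2 i) *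
              |ψ i (w * y i - (m i : ℝ))|))
            = (∏ i, ((1 + |w * y i - (m i : ℝ)|)/w) ^ (lj.2 i)) *
              ∏ i, |ψ i (w * y i - (m i : ℝ))| := by
          rw [← Finset.prod_mul_distrib]
          exact Finset.prod_congr rfl fun i _ => by rw [div_pow]
        rw [hP, ← div_pow, hBdef]
        calc (|φ (w * x - (k : ℝ))| * ∏ i, |ψ i (w * y i - (m i : ℝ))|) *
            (c * w ^ (d + 1) *
              ((N * ((1 + |w * x - (k : ℝ)|)/w) ^ lj.1 *
                ∏ i, ((1 + |w * y i - (m i : ℝ)|)/w) ^ (lj.2 i)) * (1/w)^d * (1/w)))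
            = (w ^ (d+1) * ((1/w)^d * (1/w))) *
              (c * N * (((1 + |w * x - (k : ℝ)|)/w) ^ lj.1 * |φ (w * x - (k : ℝ))|) *
                ((∏ i, ((1 + |w * y i - (m i : ℝ)|)/w) ^ (lj.2 i)) *
                  ∏ i, |ψ i (w * y i - (m i : ℝ))|)) := by ring
        _ = c * N * (((1 + |w * x - (k : ℝ)|)/w) ^ lj.1 * |φ (w * x - (k : ℝ))|) *
              ((∏ i, ((1 + |w * y i - (m i : ℝ)|)/w) ^ (lj.2 i)) *
                ∏ i, |ψ i (w * y i - (m i : ℝ))|) := by rw [hww, one_mul]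
  calc |Kterm d n φ ψ w f (x, y) (k, m)|
      = (|φ (w * x - (k : ℝ))| * ∏ i, |ψ i (w * y i - (m i : ℝ))|) *
        |∑ lj ∈ idxLE d n,
          (1 / ((lj.1.factorial : ℝ) * ∏ i, ((lj.2 i).factorial : ℝ))) * w ^ (d + 1) *
            ∫ u in Set.Icc ((k : ℝ) / w) (((k : ℝ) + 1) / w),
              ∫ v in Set.univ.pi fun i => Set.Icc ((m i : ℝ) / w) (((m i : ℝ) + 1) / w),
                pderivMixed d lj.1 lj.2 f (u, v) * (x - u) ^ lj.1 *
                  ∏ i, (y i - v i) ^ lj.2 i| := by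
        rw [Kterm, abs_mul, abs_mul, Finset.abs_prod]
  _ ≤ (|φ (w * x - (k : ℝ))| * ∏ i, |ψ i (w * y i - (m i : ℝ))|) *
        ∑ lj ∈ idxLE d n,
          |(1 / ((lj.1.factorial : ℝ) * ∏ i, ((lj.2 i).factorial : ℝ))) * w ^ (d + 1) *
            ∫ u in Set.Icc ((k : ℝ) / w) (((k : ℝ) + 1) / w),
              ∫ v in Set.univ.pi fun i => Set.Icc ((m i : ℝ) / w) (((m i : ℝ) + 1) / w),
                pderivMixed d lj.1 lj.2 f (u, v) * (x - u) ^ lj.1 *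
                  ∏ i, (y i - v i) ^ lj.2 i| := by
        apply mul_le_mul_of_nonneg_left (Finset.abs_sum_le_sum_abs _ _) (by positivity)
  _ = ∑ lj ∈ idxLE d n,
        (|φ (w * x - (k : ℝ))| * ∏ i, |ψ i (w * y i - (m i : ℝ))|) *
          |(1 / ((lj.1.factorial : ℝ) * ∏ i, ((lj.2 i).factorial : ℝ))) * w ^ (d + 1) *
            ∫ u in Set.Icc ((k : ℝ) / w) (((k : ℝ) + 1) / w),
              ∫ v in Set.univ.pi fun i => Set.Icc ((m i : ℝ) / w) (((m i : ℝ) + 1) / w),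
                pderivMixed d lj.1 lj.2 f (u, v) * (x - u) ^ lj.1 *
                  ∏ i, (y i - v i) ^ lj.2 i| := Finset.mul_sum _ _ _
  _ ≤ ∑ lj ∈ idxLE d n,
        (1 / ((lj.1.factorial : ℝ) * ∏ i, ((lj.2 i).factorial : ℝ))) *
          supNorm d (pderivMixed d lj.1 lj.2 f) *
          ((1 + |w * x - (k : ℝ)|) ^ lj.1 / w ^ lj.1 * |φ (w * x - (k : ℝ))|) *
          ∏ i, ((1 + |w * y i - (m i : ℝ)|) ^ (lj.2 i) / w ^ (lj.2 i) *
            |ψ i (w * y i - (m i : ℝ))|) := Finset.sum_le_sum hterm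

lemma tsum_prod_mul {d : ℕ} (A : ℤ → ℝ≥0∞) (G : Fin d → ℤ → ℝ≥0∞) (C : ℝ≥0∞) :
    (∑' km : ℤ × (Fin d → ℤ), (C * A km.1) * ∏ i, G i (km.2 i))
      = C * (∑' k : ℤ, A k) * ∏ i, ∑' j : ℤ, G i j := by
  rw [ENNReal.tsum_prod']
  calc (∑' (a : ℤ) (b : Fin d → ℤ), (C * A a) * ∏ i, G i (b i))
      = ∑' a : ℤ, (C * A a) * ∑' b : Fin d → ℤ, ∏ i, G i (b i) :=
        tsum_congr fun a => ENNReal.tsum_mul_left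
  _ = (∑' a : ℤ, C * A a) * ∑' b : Fin d → ℤ, ∏ i, G i (b i) := ENNReal.tsum_mul_right
  _ = C * (∑' k : ℤ, A k) * ∏ i, ∑' j : ℤ, G i j := by
      rw [ENNReal.tsum_mul_left, tsum_pi_prod d G]

lemma ennreal_rearrange (a b c' : ℝ) (ha : 0 ≤ a) (hb : 0 ≤ b) (e : ℝ)
    (he : a * b * c' = e) (S T : ℝ≥0∞) :
    ENNReal.ofReal a * (ENNReal.ofReal b * S) * (ENNReal.ofReal c' * T)
      = ENNReal.ofReal e * (S * T) := by
  rw [← he, ENNReal.ofReal_mul (mul_nonneg ha hb), ENNReal.ofReal_mul ha]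
  ring

lemma tsum_Kbound (d n : ℕ) {w : ℝ} (hw : 0 < w) (φ : ℝ → ℝ) (ψ : Fin d → ℝ → ℝ)
    (f : ℝ × (Fin d → ℝ) → ℝ) (p : ℝ × (Fin d → ℝ)) :
    ∑' km : ℤ × (Fin d → ℤ), ENNReal.ofReal
      (∑ lj ∈ idxLE d n,
        (1 / ((lj.1.factorial : ℝ) * ∏ i, ((lj.2 i).factorial : ℝ))) *
          supNorm d (pderivMixed d lj.1 lj.2 f) *
          ((1 + |w * p.1 - (km.1 : ℝ)|) ^ lj.1 / w ^ lj.1 * |φ (w * p.1 - (km.1 : ℝ))|) *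
          ∏ i, ((1 + |w * p.2 i - (km.2 i : ℝ)|) ^ (lj.2 i) / w ^ (lj.2 i) *
            |ψ i (w * p.2 i - (km.2 i : ℝ))|))
    ≤ ∑ lj ∈ idxLE d n,
        ENNReal.ofReal ((1 / ((lj.1.factorial : ℝ) * ∏ i, ((lj.2 i).factorial : ℝ))) *
          ((2:ℝ) ^ (lj.1 + ∑ i, lj.2 i) / 2 ^ (d + 1) / w ^ (lj.1 + ∑ i, lj.2 i)) *
          supNorm d (pderivMixed d lj.1 lj.2 f)) *
        ((absMoment φ (lj.1 : ℝ) + absMoment φ 0) *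
          ∏ i, (absMoment (ψ i) ((lj.2 i : ℕ) : ℝ) + absMoment (ψ i) 0)) := by
  have hXnn : ∀ (χ : ℝ → ℝ) (l : ℕ) (t : ℝ), 0 ≤ (1 + |t|) ^ l / w ^ l * |χ t| := fun χ l t =>
    mul_nonneg (div_nonneg (by positivity) (pow_nonneg hw.le _)) (abs_nonneg _)
  have htermnn : ∀ lj : ℕ × (Fin d → ℕ), ∀ km : ℤ × (Fin d → ℤ),
      0 ≤ (1 / ((lj.1.factorial : ℝ) * ∏ i, ((lj.2 i).factorial : ℝ))) *
        supNorm d (pderivMixed d lj.1 lj.2 f) *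
        ((1 + |w * p.1 - (km.1 : ℝ)|) ^ lj.1 / w ^ lj.1 * |φ (w * p.1 - (km.1 : ℝ))|) *
        ∏ i, ((1 + |w * p.2 i - (km.2 i : ℝ)|) ^ (lj.2 i) / w ^ (lj.2 i) *
          |ψ i (w * p.2 i - (km.2 i : ℝ))|) := by
    intro lj km
    refine mul_nonneg (mul_nonneg (mul_nonneg (by positivity) (supNorm_nonneg _ _))
      (hXnn φ lj.1 _)) (Finset.prod_nonneg fun i _ => hXnn (ψ i) (lj.2 i) _)
  rw [tsum_congr (fun km => ENNReal.ofReal_sum_of_nonneg (fun lj _ => htermnn lj km)),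
    Summable.tsum_finsetSum (fun lj _ => ENNReal.summable)]
  refine Finset.sum_le_sum fun lj hlj => ?_
  have hc0 : (0:ℝ) ≤ 1 / ((lj.1.factorial : ℝ) * ∏ i, ((lj.2 i).factorial : ℝ)) := by positivity
  have hN0 : (0:ℝ) ≤ supNorm d (pderivMixed d lj.1 lj.2 f) := supNorm_nonneg _ _
  have hcN0 : (0:ℝ) ≤ (1 / ((lj.1.factorial : ℝ) * ∏ i, ((lj.2 i).factorial : ℝ))) *
      supNorm d (pderivMixed d lj.1 lj.2 f) := mul_nonneg hc0 hN0
  have e1 : ∀ km : ℤ × (Fin d → ℤ),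
      ENNReal.ofReal ((1 / ((lj.1.factorial : ℝ) * ∏ i, ((lj.2 i).factorial : ℝ))) *
        supNorm d (pderivMixed d lj.1 lj.2 f) *
        ((1 + |w * p.1 - (km.1 : ℝ)|) ^ lj.1 / w ^ lj.1 * |φ (w * p.1 - (km.1 : ℝ))|) *
        ∏ i, ((1 + |w * p.2 i - (km.2 i : ℝ)|) ^ (lj.2 i) / w ^ (lj.2 i) *
          |ψ i (w * p.2 i - (km.2 i : ℝ))|))
      = (ENNReal.ofReal ((1 / ((lj.1.factorial : ℝ) * ∏ i, ((lj.2 i).factorial : ℝ))) *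
          supNorm d (pderivMixed d lj.1 lj.2 f)) *
        ENNReal.ofReal ((1 + |w * p.1 - (km.1 : ℝ)|) ^ lj.1 / w ^ lj.1 *
          |φ (w * p.1 - (km.1 : ℝ))|)) *
        ∏ i, ENNReal.ofReal ((1 + |w * p.2 i - (km.2 i : ℝ)|) ^ (lj.2 i) / w ^ (lj.2 i) *
          |ψ i (w * p.2 i - (km.2 i : ℝ))|) := by
    intro km
    rw [ENNReal.ofReal_mul (mul_nonneg hcN0 (hXnn φ lj.1 _)), ENNReal.ofReal_mul hcN0,
      ENNReal.ofReal_prod_of_nonneg (fun i _ => hXnn (ψ i) (lj.2 i) _)]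
  rw [tsum_congr e1, tsum_prod_mul
    (fun k : ℤ => ENNReal.ofReal ((1 + |w * p.1 - (k : ℝ)|) ^ lj.1 / w ^ lj.1 *
      |φ (w * p.1 - (k : ℝ))|))
    (fun i j => ENNReal.ofReal ((1 + |w * p.2 i - (j : ℝ)|) ^ (lj.2 i) / w ^ (lj.2 i) *
      |ψ i (w * p.2 i - (j : ℝ))|))
    (ENNReal.ofReal ((1 / ((lj.1.factorial : ℝ) * ∏ i, ((lj.2 i).factorial : ℝ))) *
      supNorm d (pderivMixed d lj.1 lj.2 f)))]
  calc ENNReal.ofReal ((1 / ((lj.1.factorial : ℝ) * ∏ i, ((lj.2 i).factorial : ℝ))) *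
        supNorm d (pderivMixed d lj.1 lj.2 f)) *
      (∑' k : ℤ, ENNReal.ofReal ((1 + |w * p.1 - (k : ℝ)|) ^ lj.1 / w ^ lj.1 *
        |φ (w * p.1 - (k : ℝ))|)) *
      ∏ i, ∑' j : ℤ, ENNReal.ofReal ((1 + |w * p.2 i - (j : ℝ)|) ^ (lj.2 i) / w ^ (lj.2 i) *
        |ψ i (w * p.2 i - (j : ℝ))|)
      ≤ ENNReal.ofReal ((1 / ((lj.1.factorial : ℝ) * ∏ i, ((lj.2 i).factorial : ℝ))) *
          supNorm d (pderivMixed d lj.1 lj.2 f)) *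
        (ENNReal.ofReal (2 ^ lj.1 / (2 * w ^ lj.1)) * (absMoment φ (lj.1 : ℝ) + absMoment φ 0)) *
        ∏ i, (ENNReal.ofReal (2 ^ (lj.2 i) / (2 * w ^ (lj.2 i))) *
          (absMoment (ψ i) ((lj.2 i : ℕ) : ℝ) + absMoment (ψ i) 0)) := by
        refine mul_le_mul' (mul_le_mul' le_rfl (sum_F_le φ lj.1 hw (w * p.1)))
          (Finset.prod_le_prod' fun i _ => sum_F_le (ψ i) (lj.2 i) hw (w * p.2 i))
  _ = ENNReal.ofReal ((1 / ((lj.1.factorial : ℝ) * ∏ i, ((lj.2 i).factorial : ℝ))) *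
        ((2:ℝ) ^ (lj.1 + ∑ i, lj.2 i) / 2 ^ (d + 1) / w ^ (lj.1 + ∑ i, lj.2 i)) *
        supNorm d (pderivMixed d lj.1 lj.2 f)) *
      ((absMoment φ (lj.1 : ℝ) + absMoment φ 0) *
        ∏ i, (absMoment (ψ i) ((lj.2 i : ℕ) : ℝ) + absMoment (ψ i) 0)) := by
      have hPann : ∀ i ∈ (Finset.univ : Finset (Fin d)),
          (0:ℝ) ≤ 2 ^ (lj.2 i) / (2 * w ^ (lj.2 i)) := fun i _ =>
        div_nonneg (by positivity) (mul_nonneg (by norm_num) (pow_nonneg hw.le _))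
      have hPa : (∏ i, ((2:ℝ) ^ (lj.2 i) / (2 * w ^ (lj.2 i))))
          = 2 ^ (∑ i, lj.2 i) / (2 ^ d * w ^ (∑ i, lj.2 i)) := by
        rw [Finset.prod_div_distrib, Finset.prod_pow_eq_pow_sum, Finset.prod_mul_distrib,
          Finset.prod_const, Finset.prod_pow_eq_pow_sum, Finset.card_univ, Fintype.card_fin]
      have hconst : ((1 / ((lj.1.factorial : ℝ) * ∏ i, ((lj.2 i).factorial : ℝ))) *
            supNorm d (pderivMixed d lj.1 lj.2 f)) * (2 ^ lj.1 / (2 * w ^ lj.1)) *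
            (∏ i, ((2:ℝ) ^ (lj.2 i) / (2 * w ^ (lj.2 i))))
          = (1 / ((lj.1.factorial : ℝ) * ∏ i, ((lj.2 i).factorial : ℝ))) *
            ((2:ℝ) ^ (lj.1 + ∑ i, lj.2 i) / 2 ^ (d + 1) / w ^ (lj.1 + ∑ i, lj.2 i)) *
            supNorm d (pderivMixed d lj.1 lj.2 f) := by
        have hfac : ((lj.1.factorial : ℝ) * ∏ i, ((lj.2 i).factorial : ℝ)) ≠ 0 :=
          ne_of_gt (mul_pos (by exact_mod_cast lj.1.factorial_pos)
            (Finset.prod_pos fun i _ => by exact_mod_cast (lj.2 i).factorial_pos))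
        have hwl : (w : ℝ) ^ lj.1 ≠ 0 := pow_ne_zero _ (ne_of_gt hw)
        have hws : (w : ℝ) ^ (∑ i, lj.2 i) ≠ 0 := pow_ne_zero _ (ne_of_gt hw)
        rw [hPa, pow_add (2:ℝ) lj.1 (∑ i, lj.2 i), pow_add w lj.1 (∑ i, lj.2 i),
          pow_succ (2:ℝ) d]
        field_simp
      rw [Finset.prod_mul_distrib, ← ENNReal.ofReal_prod_of_nonneg hPann]
      exact ennreal_rearrange _ _ _ hcN0
        (div_nonneg (by positivity) (mul_nonneg (by norm_num) (pow_nonneg hw.le _)))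
        _ hconst _ _

set_option maxHeartbeats 2000000 in
/-- Well-definedness of the Hermite-type sampling Kantorovich operator:
the double series converges absolutely at every point and the stated bound holds. -/
theorem wellDefined_and_bound_Kop
    (d n : ℕ) (hd : 1 ≤ d) (w : ℝ) (hw : 0 < w)
    (φ : ℝ → ℝ) (ψ : Fin d → ℝ → ℝ)
    (hφ : IsKernelOfOrder φ n) (hψ : ∀ i, IsKernelOfOrder (ψ i) n)
    (f : ℝ × (Fin d → ℝ) → ℝ) (hf : CbN d n f) :
    (∀ p : ℝ × (Fin d → ℝ),
        Summable fun km : ℤ × (Fin d → ℤ) => |Kterm d n φ ψ w f p km|) ∧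
    (∀ p : ℝ × (Fin d → ℝ),
        |Kop d n φ ψ w f p| ≤
          ∑ lj ∈ idxLE d n,
            (1 / ((lj.1.factorial : ℝ) * ∏ i, ((lj.2 i).factorial : ℝ))) *
              ((2 : ℝ) ^ (lj.1 + ∑ i, lj.2 i) / 2 ^ (d + 1) / w ^ (lj.1 + ∑ i, lj.2 i)) *
              supNorm d (pderivMixed d lj.1 lj.2 f) *
              ((absMoment φ (lj.1 : ℝ)).toReal + (absMoment φ 0).toReal) *
              ∏ i, ((absMoment (ψ i) ((lj.2 i : ℕ) : ℝ)).toReal + (absMoment (ψ i) 0).toReal)) := by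
  have hidx : ∀ lj ∈ idxLE d n, lj.1 ≤ n ∧ ∀ i, lj.2 i ≤ n := by
    intro lj hlj
    have h := mem_idxLE hlj
    refine ⟨le_trans (Nat.le_add_right _ _) h, fun i => ?_⟩
    refine le_trans ?_ (le_trans (Nat.le_add_left _ _) h)
    exact Finset.single_le_sum (fun i _ => Nat.zero_le _) (Finset.mem_univ i)
  have hKnn : ∀ lj : ℕ × (Fin d → ℕ),
      (0:ℝ) ≤ (1 / ((lj.1.factorial : ℝ) * ∏ i, ((lj.2 i).factorial : ℝ))) *
        ((2 : ℝ) ^ (lj.1 + ∑ i, lj.2 i) / 2 ^ (d + 1) / w ^ (lj.1 + ∑ i, lj.2 i)) *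
        supNorm d (pderivMixed d lj.1 lj.2 f) := by
    intro lj
    refine mul_nonneg (mul_nonneg (by positivity) ?_) (supNorm_nonneg _ _)
    exact div_nonneg (div_nonneg (by positivity) (by positivity)) (pow_nonneg hw.le _)
  have hterm_ne_top : ∀ lj ∈ idxLE d n,
      ENNReal.ofReal ((1 / ((lj.1.factorial : ℝ) * ∏ i, ((lj.2 i).factorial : ℝ))) *
          ((2:ℝ) ^ (lj.1 + ∑ i, lj.2 i) / 2 ^ (d + 1) / w ^ (lj.1 + ∑ i, lj.2 i)) *
          supNorm d (pderivMixed d lj.1 lj.2 f)) *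
        ((absMoment φ (lj.1 : ℝ) + absMoment φ 0) *
          ∏ i, (absMoment (ψ i) ((lj.2 i : ℕ) : ℝ) + absMoment (ψ i) 0)) ≠ ⊤ := by
    intro lj hlj
    obtain ⟨hl, hj⟩ := hidx lj hlj
    refine ENNReal.mul_ne_top ENNReal.ofReal_ne_top (ENNReal.mul_ne_top ?_ ?_)
    · exact (ENNReal.add_lt_top.2 ⟨absMoment_natCast_lt_top hφ hl, absMoment_zero_lt_top hφ⟩).ne
    · exact (ENNReal.prod_lt_top fun i _ => ENNReal.add_lt_top.2
        ⟨absMoment_natCast_lt_top (hψ i) (hj i), absMoment_zero_lt_top (hψ i)⟩).ne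
  have hEtop : (∑ lj ∈ idxLE d n,
      ENNReal.ofReal ((1 / ((lj.1.factorial : ℝ) * ∏ i, ((lj.2 i).factorial : ℝ))) *
          ((2:ℝ) ^ (lj.1 + ∑ i, lj.2 i) / 2 ^ (d + 1) / w ^ (lj.1 + ∑ i, lj.2 i)) *
          supNorm d (pderivMixed d lj.1 lj.2 f)) *
        ((absMoment φ (lj.1 : ℝ) + absMoment φ 0) *
          ∏ i, (absMoment (ψ i) ((lj.2 i : ℕ) : ℝ) + absMoment (ψ i) 0))) ≠ ⊤ :=
    (ENNReal.sum_lt_top.2 fun lj hlj => (hterm_ne_top lj hlj).lt_top).ne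
  have hE : ∀ p : ℝ × (Fin d → ℝ),
      (∑' km : ℤ × (Fin d → ℤ), ENNReal.ofReal |Kterm d n φ ψ w f p km|)
        ≤ ∑ lj ∈ idxLE d n,
          ENNReal.ofReal ((1 / ((lj.1.factorial : ℝ) * ∏ i, ((lj.2 i).factorial : ℝ))) *
              ((2:ℝ) ^ (lj.1 + ∑ i, lj.2 i) / 2 ^ (d + 1) / w ^ (lj.1 + ∑ i, lj.2 i)) *
              supNorm d (pderivMixed d lj.1 lj.2 f)) *
            ((absMoment φ (lj.1 : ℝ) + absMoment φ 0) *
              ∏ i, (absMoment (ψ i) ((lj.2 i : ℕ) : ℝ) + absMoment (ψ i) 0)) := fun p =>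
    le_trans (ENNReal.tsum_le_tsum fun km =>
      ENNReal.ofReal_le_ofReal (Kterm_bound d n hw φ ψ f hf p km)) (tsum_Kbound d n hw φ ψ f p)
  have hsummable : ∀ p : ℝ × (Fin d → ℝ),
      Summable fun km : ℤ × (Fin d → ℤ) => |Kterm d n φ ψ w f p km| := by
    intro p
    have h := ENNReal.summable_toReal (((hE p).trans_lt hEtop.lt_top).ne)
    exact h.congr fun km => ENNReal.toReal_ofReal (abs_nonneg _)
  refine ⟨hsummable, fun p => ?_⟩
  have hsum : Summable fun km : ℤ × (Fin d → ℤ) => Kterm d n φ ψ w f p km :=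
    Summable.of_norm (by simpa only [Real.norm_eq_abs] using hsummable p)
  have hKop : Kop d n φ ψ w f p = ∑' km : ℤ × (Fin d → ℤ), Kterm d n φ ψ w f p km := by
    rw [Kop]
    exact (Summable.tsum_prod' hsum hsum.prod_factor).symm
  rw [hKop]
  calc |∑' km : ℤ × (Fin d → ℤ), Kterm d n φ ψ w f p km|
      ≤ ∑' km : ℤ × (Fin d → ℤ), |Kterm d n φ ψ w f p km| := by
        have hns : Summable fun km : ℤ × (Fin d → ℤ) => ‖Kterm d n φ ψ w f p km‖ := by
          simpa only [Real.norm_eq_abs] using hsummable p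
        simpa only [Real.norm_eq_abs] using norm_tsum_le_tsum_norm hns
  _ = (∑' km : ℤ × (Fin d → ℤ), ENNReal.ofReal |Kterm d n φ ψ w f p km|).toReal := by
        rw [ENNReal.tsum_toReal_eq fun km => ENNReal.ofReal_ne_top]
        exact tsum_congr fun km => (ENNReal.toReal_ofReal (abs_nonneg _)).symm
  _ ≤ (∑ lj ∈ idxLE d n,
        ENNReal.ofReal ((1 / ((lj.1.factorial : ℝ) * ∏ i, ((lj.2 i).factorial : ℝ))) *
            ((2:ℝ) ^ (lj.1 + ∑ i, lj.2 i) / 2 ^ (d + 1) / w ^ (lj.1 + ∑ i, lj.2 i)) *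
            supNorm d (pderivMixed d lj.1 lj.2 f)) *
          ((absMoment φ (lj.1 : ℝ) + absMoment φ 0) *
            ∏ i, (absMoment (ψ i) ((lj.2 i : ℕ) : ℝ) + absMoment (ψ i) 0))).toReal :=
      ENNReal.toReal_mono hEtop (hE p)
  _ = ∑ lj ∈ idxLE d n,
        (1 / ((lj.1.factorial : ℝ) * ∏ i, ((lj.2 i).factorial : ℝ))) *
          ((2 : ℝ) ^ (lj.1 + ∑ i, lj.2 i) / 2 ^ (d + 1) / w ^ (lj.1 + ∑ i, lj.2 i)) *
          supNorm d (pderivMixed d lj.1 lj.2 f) *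
          ((absMoment φ (lj.1 : ℝ)).toReal + (absMoment φ 0).toReal) *
          ∏ i, ((absMoment (ψ i) ((lj.2 i : ℕ) : ℝ)).toReal + (absMoment (ψ i) 0).toReal) := by
      rw [ENNReal.toReal_sum hterm_ne_top]
      refine Finset.sum_congr rfl fun lj hlj => ?_
      obtain ⟨hl, hj⟩ := hidx lj hlj
      rw [ENNReal.toReal_mul, ENNReal.toReal_ofReal (hKnn lj), ENNReal.toReal_mul,
        ENNReal.toReal_add (absMoment_natCast_lt_top hφ hl).ne (absMoment_zero_lt_top hφ).ne,
        ENNReal.toReal_prod]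
      rw [Finset.prod_congr rfl (fun i (_ : i ∈ Finset.univ) => ENNReal.toReal_add
        (absMoment_natCast_lt_top (hψ i) (hj i)).ne (absMoment_zero_lt_top (hψ i)).ne)]
      ring
end
end

section
/- Let j ≥ 1 and let χ : ℝ → ℝ be j-times continuously differentiable with all derivatives up to order j bounded; assume Σ_{k∈ℤ} χ(u−k) = 1 for every u ∈ ℝ, and that for each l = 1, …, j one has M_0(χ^{(l)}) < ∞ and lim_{N→∞} sup_{u∈ℝ} Σ_{k∈ℤ, |u−k|≥N} |χ^{(l)}(u−k)| = 0. Then for every l = 1, …, j and every u ∈ ℝ, Σ_{k∈ℤ} χ^{(l)}(u−k) = 0. -/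
open MeasureTheory Filter Topology Finset
open scoped ENNReal NNReal

noncomputable section

/-- Vanishing of the sums of translates of the derivatives of a partition
of unity: if `Σ_k χ(u-k) = 1` and the derivatives of `χ` have finite zero-th moments with
uniformly vanishing tails, then `Σ_k χ^{(l)}(u-k) = 0` for `1 ≤ l ≤ j`. -/
theorem hasSum_iteratedDeriv_zero
    (j : ℕ) (hj : 1 ≤ j) (χ : ℝ → ℝ)
    (hreg : ContDiff ℝ (j : ℕ∞) χ)
    (hb : ∀ l ≤ j, ∃ C : ℝ, ∀ t : ℝ, |iteratedDeriv l χ t| ≤ C)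
    (hsum : ∀ u : ℝ, HasSum (fun k : ℤ => χ (u - (k : ℝ))) 1)
    (hM : ∀ l, 1 ≤ l → l ≤ j → absMoment (iteratedDeriv l χ) 0 < ⊤)
    (htail : ∀ l, 1 ≤ l → l ≤ j →
      Tendsto (fun N : ℕ => tailSup (iteratedDeriv l χ) 0 N) atTop (𝓝 0)) :
    ∀ l, 1 ≤ l → l ≤ j → ∀ u : ℝ,
      HasSum (fun k : ℤ => iteratedDeriv l χ (u - (k : ℝ))) 0 := by
  classical
  -- absolute summability of translates of derivatives
  have key : ∀ l, 1 ≤ l → l ≤ j → ∀ u : ℝ,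
      Summable (fun k : ℤ => |iteratedDeriv l χ (u - (k : ℝ))|) := by
    intro l hl1 hlj u
    have hle : (∑' k : ℤ, ENNReal.ofReal
        (|u - (k : ℝ)| ^ (0:ℝ) * |iteratedDeriv l χ (u - (k : ℝ))|))
        ≤ absMoment (iteratedDeriv l χ) 0 := by
      unfold absMoment
      exact le_iSup (fun u : ℝ => ∑' k : ℤ,
        ENNReal.ofReal (|u - (k : ℝ)| ^ (0:ℝ) * |iteratedDeriv l χ (u - (k : ℝ))|)) u
    have hne : (∑' k : ℤ, ENNReal.ofReal (|iteratedDeriv l χ (u - (k : ℝ))|)) ≠ ⊤ := by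
      have := hle.trans_lt (hM l hl1 hlj)
      simpa [Real.rpow_zero] using this.ne
    have := ENNReal.summable_toReal hne
    simpa [ENNReal.toReal_ofReal, abs_nonneg] using this
  -- uniform convergence of partial sums of translated derivatives on balls
  have hUnif : ∀ l, 1 ≤ l → l ≤ j → ∀ u0 : ℝ,
      TendstoUniformlyOn
        (fun (K : Finset ℤ) u => ∑ k ∈ K, iteratedDeriv l χ (u - (k : ℝ)))
        (fun u => ∑' k : ℤ, iteratedDeriv l χ (u - (k : ℝ)))
        atTop (Metric.ball u0 1) := by
    intro l hl1 hlj u0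
    rw [Metric.tendstoUniformlyOn_iff]
    intro ε hε
    have hε' : (0 : ℝ≥0∞) < ENNReal.ofReal ε := ENNReal.ofReal_pos.mpr hε
    obtain ⟨N, hN⟩ := ((htail l hl1 hlj).eventually_lt_const hε').exists
    unfold tailSup at hN
    set K₀ : Finset ℤ := Finset.Icc ⌊u0 - 1 - (N : ℝ)⌋ ⌈u0 + 1 + (N : ℝ)⌉ with hK₀
    rw [eventually_atTop]
    refine ⟨K₀, fun K hK u hu => ?_⟩
    set g : ℤ → ℝ := fun k => iteratedDeriv l χ (u - (k : ℝ)) with hg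
    have hsg : Summable g := (key l hl1 hlj u).of_abs
    have hfar : ∀ k : ℤ, k ∉ K → (N : ℝ) ≤ |u - (k : ℝ)| := by
      intro k hk
      have hk0 : k ∉ K₀ := fun h => hk (hK h)
      rw [hK₀, Finset.mem_Icc, not_and_or, not_le, not_le] at hk0
      have hu' : |u - u0| < 1 := by simpa [Real.dist_eq] using hu
      have hu1 : u0 - 1 < u := by cases abs_lt.mp hu' with | intro a b => linarith
      have hu2 : u < u0 + 1 := by cases abs_lt.mp hu' with | intro a b => linarith
      rcases hk0 with h | h
      · have : (k : ℝ) ≤ ⌊u0 - 1 - (N : ℝ)⌋ - 1 := by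
          have : k ≤ ⌊u0 - 1 - (N : ℝ)⌋ - 1 := by omega
          exact_mod_cast this
        have hfl : (⌊u0 - 1 - (N : ℝ)⌋ : ℝ) ≤ u0 - 1 - (N : ℝ) := Int.floor_le _
        have : (N : ℝ) ≤ u - (k : ℝ) := by linarith
        exact this.trans (le_abs_self _)
      · have : (⌈u0 + 1 + (N : ℝ)⌉ : ℝ) + 1 ≤ (k : ℝ) := by
          have : ⌈u0 + 1 + (N : ℝ)⌉ + 1 ≤ k := by omega
          exact_mod_cast this
        have hcl : u0 + 1 + (N : ℝ) ≤ (⌈u0 + 1 + (N : ℝ)⌉ : ℝ) := Int.le_ceil _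
        have : (N : ℝ) ≤ -(u - (k : ℝ)) := by linarith
        exact this.trans (neg_le_abs _)
    -- tail sum estimate
    have hsub : Summable fun x : ↑((↑K : Set ℤ)ᶜ) => |g ↑x| := (key l hl1 hlj u).subtype _
    have hofReal : ENNReal.ofReal (∑' x : ↑((↑K : Set ℤ)ᶜ), |g ↑x|)
        < ENNReal.ofReal ε := by
      rw [ENNReal.ofReal_tsum_of_nonneg (fun _ => abs_nonneg _) hsub]
      have h1 : (∑' x : ↑((↑K : Set ℤ)ᶜ), ENNReal.ofReal |g ↑x|)
          = ∑' k : ℤ, ((↑K : Set ℤ)ᶜ).indicator (fun k => ENNReal.ofReal |g k|) k :=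
        _root_.tsum_subtype ((↑K : Set ℤ)ᶜ) (fun k => ENNReal.ofReal |g k|)
      rw [h1]
      refine lt_of_le_of_lt (le_trans (ENNReal.tsum_le_tsum fun k => ?_)
        (le_iSup (fun u : ℝ => ∑' k : ℤ,
          if (N : ℝ) ≤ |u - (k : ℝ)| then
            ENNReal.ofReal (|u - (k : ℝ)| ^ (0:ℝ) * |iteratedDeriv l χ (u - (k : ℝ))|)
          else 0) u)) hN
      by_cases hk : k ∈ K
      · simp [Set.indicator_of_notMem, hk]
      · rw [Set.indicator_of_mem (by simpa using hk)]
        rw [if_pos (hfar k hk)]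
        simp [Real.rpow_zero, hg]
    have htails : (∑' x : ↑((↑K : Set ℤ)ᶜ), |g ↑x|) < ε :=
      (ENNReal.ofReal_lt_ofReal_iff_of_nonneg (tsum_nonneg fun _ => abs_nonneg _)).mp hofReal
    rw [Real.dist_eq]
    have hdecomp : (∑ k ∈ K, g k) + (∑' x : ↑((↑K : Set ℤ)ᶜ), g ↑x) = ∑' k, g k :=
      Summable.sum_add_tsum_compl hsg
    have : (∑' k, g k) - ∑ k ∈ K, g k = ∑' x : ↑((↑K : Set ℤ)ᶜ), g ↑x := by linarith
    rw [this]
    calc |∑' x : ↑((↑K : Set ℤ)ᶜ), g ↑x| ≤ ∑' x : ↑((↑K : Set ℤ)ᶜ), |g ↑x| := by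
          have := norm_tsum_le_tsum_norm (f := fun x : ↑((↑K : Set ℤ)ᶜ) => g ↑x)
            (by simpa [Real.norm_eq_abs] using hsub)
          simpa [Real.norm_eq_abs] using this
      _ < ε := htails
  -- differentiability of iterated derivatives
  have hdiff : ∀ l, l < j → Differentiable ℝ (iteratedDeriv l χ) := by
    intro l hl
    exact hreg.differentiable_iteratedDeriv l (by exact_mod_cast hl)
  -- inductive step
  have step : ∀ (l : ℕ) (c : ℝ), l + 1 ≤ j →
      (∀ u : ℝ, HasSum (fun k : ℤ => iteratedDeriv l χ (u - (k : ℝ))) c) →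
      ∀ u : ℝ, (∑' k : ℤ, iteratedDeriv (l + 1) χ (u - (k : ℝ))) = 0 := by
    intro l c hl hc u0
    have hld : HasDerivAt (fun _ : ℝ => c)
        (∑' k : ℤ, iteratedDeriv (l + 1) χ (u0 - (k : ℝ))) u0 := by
      refine hasDerivAt_of_tendstoUniformlyOn
        (f := fun (K : Finset ℤ) (u : ℝ) => ∑ k ∈ K, iteratedDeriv l χ (u - (k : ℝ)))
        Metric.isOpen_ball
        (hUnif (l + 1) (by omega) hl u0) ?_ ?_ (Metric.mem_ball_self one_pos)
      · refine Eventually.of_forall fun K => fun x _ => ?_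
        refine HasDerivAt.fun_sum fun k _ => ?_
        have h1 : HasDerivAt (fun u : ℝ => u - (k : ℝ)) 1 x := by
          simpa using (hasDerivAt_id x).sub_const (k : ℝ)
        have h2 : HasDerivAt (iteratedDeriv l χ)
            (deriv (iteratedDeriv l χ) (x - (k : ℝ))) (x - (k : ℝ)) :=
          (hdiff l (by omega) (x - (k : ℝ))).hasDerivAt
        have := h2.comp x h1
        simpa [iteratedDeriv_succ, Function.comp_def] using this
      · intro x _
        exact hc x
    have := hld.unique (hasDerivAt_const u0 c)
    linarith
  -- main statement for tsums, by induction
  have main : ∀ l, 1 ≤ l → l ≤ j → ∀ u : ℝ,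
      (∑' k : ℤ, iteratedDeriv l χ (u - (k : ℝ))) = 0 := by
    intro l
    induction l with
    | zero => intro h; omega
    | succ n ih =>
      intro _ hnj u
      rcases Nat.eq_zero_or_pos n with rfl | hn
      · exact step 0 1 hnj (by simpa [iteratedDeriv_zero] using hsum) u
      · refine step n 0 hnj (fun v => ?_) u
        have hs : Summable (fun k : ℤ => iteratedDeriv n χ (v - (k : ℝ))) :=
          (key n hn (by omega) v).of_abs
        have := hs.hasSum
        rwa [ih hn (by omega) v] at this
  intro l hl1 hlj u
  have hs : Summable (fun k : ℤ => iteratedDeriv l χ (u - (k : ℝ))) :=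
    (key l hl1 hlj u).of_abs
  have := hs.hasSum
  rwa [main l hl1 hlj u] at this
end
end
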